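/- arXiv:0909.1112 — 2 statements merged into one kernel-verified Lean document; each statement's English description precedes it below -/
import Mathlib

section
/- For any P ∈ ℂ[x₁,…,xₙ] and any f ∈ ℂ⟨x₁,…,xₙ⟩, the constant term of f⃖(d)·ψ(P) equals the constant term of χ(f)(∂)·P, where χ(f)(∂) is the differential operator obtained from the commutative polynomial χ(f) by substituting x_i ↦ ∂/∂x_i. -/
open scoped BigOperators

/-- The free associative algebra `ℂ⟨x₁,…,xₙ⟩`, with monomial basis the words. -/
abbrev NCPoly (n : ℕ) := MonoidAlgebra ℂ (FreeMonoid (Fin n))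

/-- Deletion of the prefix `u`: the operator `d_{u⃖}`. -/
noncomputable def Dop {n : ℕ} (u : FreeMonoid (Fin n)) (f : NCPoly n) : NCPoly n :=
  MonoidAlgebra.ofCoeff (Finsupp.comapDomain (fun w => u * w) f.coeff (fun _ _ _ _ h => mul_left_cancel h))

/-- The word pairing `⟨f,P⟩ = Σ_w f_w P_w`. -/
noncomputable def wpair {n : ℕ} (f P : NCPoly n) : ℂ :=
  f.coeff.sum fun w c => c * P.coeff w

/-- `f` is homogeneous (all words in its support have the same length). -/
def IsHomog {n : ℕ} (f : NCPoly n) : Prop :=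
  ∃ d : ℕ, ∀ w ∈ f.coeff.support, FreeMonoid.length w = d

/-- A two-sided ideal is homogeneous if it contains every homogeneous component
of each of its elements. -/
def IsHomogIdeal {n : ℕ} (I : TwoSidedIdeal (NCPoly n)) : Prop :=
  ∀ f ∈ I, ∀ d : ℕ,
    MonoidAlgebra.ofCoeff (f.coeff.filter fun w : FreeMonoid (Fin n) => FreeMonoid.length w = d) ∈ I

/-- The abelianization map `χ : ℂ⟨x₁,…,xₙ⟩ → ℂ[x₁,…,xₙ]`. -/
noncomputable def chiMap (n : ℕ) : NCPoly n →ₐ[ℂ] MvPolynomial (Fin n) ℂ :=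
  MonoidAlgebra.lift ℂ (MvPolynomial (Fin n) ℂ) (FreeMonoid (Fin n))
    (FreeMonoid.lift fun i => MvPolynomial.X i)

/-- `ψ(x^α) = Σ_{π∈S_k} u∘π`, the sum over all position-permutations of a word `u`. -/
noncomputable def sympWord {n : ℕ} (u : List (Fin n)) : NCPoly n :=
  ∑ π : Equiv.Perm (Fin u.length),
    MonoidAlgebra.single (FreeMonoid.ofList (List.ofFn fun i => u.get (π i))) (1 : ℂ)

/-- A canonical word with abelianization `x^α`. -/
def wordOf {n : ℕ} (α : Fin n →₀ ℕ) : List (Fin n) :=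
  (List.finRange n).flatMap fun i => List.replicate (α i) i

/-- The linear injection `ψ : ℂ[x₁,…,xₙ] → ℂ⟨x₁,…,xₙ⟩`. -/
noncomputable def psiMap {n : ℕ} (P : MvPolynomial (Fin n) ℂ) : NCPoly n :=
  (AddMonoidAlgebra.coeff P).sum fun α c => c • sympWord (wordOf α)

/-- The operator `f⃖(d)` applied to `P`. -/
noncomputable def fdApply {n : ℕ} (f P : NCPoly n) : NCPoly n :=
  f.coeff.sum fun w c => c • Dop w P

/-- The iterated partial derivative `∂^β`. -/
noncomputable def pdOp {n : ℕ} (β : Fin n →₀ ℕ) (P : MvPolynomial (Fin n) ℂ) :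
    MvPolynomial (Fin n) ℂ :=
  (List.finRange n).foldl (fun Q i => (fun Q' => MvPolynomial.pderiv i Q')^[β i] Q) P

/-- The differential operator `Q(∂)` applied to `P`. -/
noncomputable def diffOp {n : ℕ} (Q P : MvPolynomial (Fin n) ℂ) : MvPolynomial (Fin n) ℂ :=
  (AddMonoidAlgebra.coeff Q).sum fun β c => c • pdOp β P
/-!
Expanding `f` in words, the left side is `Σ_w f_w ψ(P)_w` and `χ(f)(∂) = Σ_w f_w ∂^{α(w)}`, where
`α(w)` is the multidegree of `w`. Both `ψ(P)_w` and the constant term of `∂^α P` equal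
`α! · [x^α] P`. For `ψ`: a permutation `π` with `u ∘ π = w` exists only if `w` rearranges `u`, and
then such permutations are the families of bijections between the fibres of `u` and `w` over each
letter, `∏_j α_j!` of them. For `∂^α`: at the origin it kills every monomial except `x^α`, which it
sends to `α!`.
-/

open MvPolynomial

section Multidegree

variable {α : Type*} [DecidableEq α]

noncomputable def multidegree (w : FreeMonoid α) : α →₀ ℕ :=
  Multiset.toFinsupp (w.toList : Multiset α)

theorem multidegree_apply (w : FreeMonoid α) (a : α) :
    multidegree w a = w.toList.count a := by
  rw [multidegree, Multiset.toFinsupp_apply, Multiset.coe_count]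

theorem multidegree_of_mul (a : α) (w : FreeMonoid α) :
    multidegree (FreeMonoid.of a * w) = Finsupp.single a 1 + multidegree w := by
  rw [multidegree, FreeMonoid.toList_of_mul, ← Multiset.cons_coe, ← Multiset.singleton_add,
    Multiset.toFinsupp_add, Multiset.toFinsupp_singleton, multidegree]

theorem lift_X_eq_monomial_multidegree {R : Type*} [CommSemiring R] (w : FreeMonoid α) :
    FreeMonoid.lift (fun i => (X i : MvPolynomial α R)) w = monomial (multidegree w) 1 := by
  induction w using FreeMonoid.inductionOn' with
  | one => simp [multidegree]
  | of_mul a w ih =>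
    rw [map_mul, FreeMonoid.lift_eval_of, ih, multidegree_of_mul, X, monomial_mul, one_mul]

end Multidegree

theorem chiMap_single {n : ℕ} (w : FreeMonoid (Fin n)) (c : ℂ) :
    chiMap n (MonoidAlgebra.single w c) = monomial (multidegree w) c := by
  rw [chiMap, MonoidAlgebra.lift_single, lift_X_eq_monomial_multidegree, smul_monomial,
    smul_eq_mul, mul_one]

theorem count_wordOf {n : ℕ} (β : Fin n →₀ ℕ) (i : Fin n) : (wordOf β).count i = β i := by
  simp only [wordOf, List.count_flatMap]
  rw [← Fin.sum_univ_def]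
  simp only [Function.comp_apply, List.count_replicate, beq_iff_eq, Finset.sum_ite_eq',
    Finset.mem_univ, if_true]

theorem perm_wordOf_iff {n : ℕ} (w : FreeMonoid (Fin n)) (β : Fin n →₀ ℕ) :
    w.toList.Perm (wordOf β) ↔ multidegree w = β := by
  simp only [List.perm_iff_count, count_wordOf, Finsupp.ext_iff, multidegree_apply]

theorem List.card_get_eq_count {α : Type*} [DecidableEq α] (l : List α) (a : α) :
    Fintype.card {x : Fin l.length // l.get x = a} = l.count a := by
  rw [Fintype.card_subtype]
  exact Fin.card_filter_univ_eq_vector_get_eq_count a ⟨l, rfl⟩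

theorem Fintype.card_equiv_eq_ite (A B : Type*) [Fintype A] [Fintype B] [DecidableEq A]
    [DecidableEq B] :
    Fintype.card (A ≃ B) =
      if Fintype.card A = Fintype.card B then (Fintype.card A).factorial else 0 := by
  split_ifs with hc
  · exact Fintype.card_equiv (Fintype.equivOfCardEq hc)
  · exact Fintype.card_eq_zero_iff.mpr ⟨fun e => hc (Fintype.card_congr e)⟩

section PermCompEq

variable {α ι : Type*}

def permCompEqEquivPiFiber (g h : α → ι) :
    {π : Equiv.Perm α // g ∘ π = h} ≃ ∀ j, ({x // h x = j} ≃ {x // g x = j}) where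
  toFun π j := π.1.subtypeEquiv fun x => by rw [← congrFun π.2 x, Function.comp_apply]
  invFun F := ⟨Equiv.ofFiberEquiv F, funext (Equiv.ofFiberEquiv_map F)⟩
  left_inv π := by ext; simp only [Equiv.ofFiberEquiv_apply]; rfl
  right_inv F := by
    funext j
    ext ⟨x, rfl⟩
    simp only [Equiv.subtypeEquiv_apply, Equiv.ofFiberEquiv_apply, Equiv.sigmaFiberEquiv,
      Equiv.symm_mk, Equiv.coe_fn_mk]
    rfl

theorem card_perm_comp_eq [Fintype α] [DecidableEq α] [Fintype ι] [DecidableEq ι] (g h : α → ι) :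
    Fintype.card {π : Equiv.Perm α // g ∘ π = h} =
      if ∀ j, Fintype.card {x // h x = j} = Fintype.card {x // g x = j}
      then ∏ j, (Fintype.card {x // g x = j}).factorial else 0 := by
  rw [Fintype.card_congr (permCompEqEquivPiFiber g h), Fintype.card_pi]
  simp_rw [Fintype.card_equiv_eq_ite]
  rw [Fintype.prod_ite_zero]
  exact if_ctx_congr Iff.rfl (fun hc => Finset.prod_congr rfl fun j _ => by rw [hc j]) fun _ => rfl

end PermCompEq

theorem coeff_sympWord_eq_card {n : ℕ} (u : List (Fin n)) (w : FreeMonoid (Fin n)) :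
    (sympWord u).coeff w = Fintype.card
      {π : Equiv.Perm (Fin u.length) // List.ofFn (fun i => u.get (π i)) = w.toList} := by
  classical
  rw [sympWord, MonoidAlgebra.coeff_sum, Finsupp.finsetSum_apply, Fintype.card_subtype,
    ← Finset.sum_boole]
  refine Finset.sum_congr rfl fun π _ => ?_
  rw [MonoidAlgebra.coeff_single, Finsupp.single_apply]
  simp only [← FreeMonoid.toList_symm, Equiv.symm_apply_eq]

theorem coeff_sympWord {n : ℕ} (u : List (Fin n)) (w : FreeMonoid (Fin n)) :
    (sympWord u).coeff w = if w.toList.Perm u then ∏ j, ((u.count j).factorial : ℂ) else 0 := by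
  rw [coeff_sympWord_eq_card]
  by_cases hlen : w.toList.length = u.length
  · set v : Fin u.length → Fin n := fun x => w.toList.get (x.cast hlen.symm)
    have hv : ∀ π : Equiv.Perm (Fin u.length),
        List.ofFn (fun i => u.get (π i)) = w.toList ↔ u.get ∘ π = v := by
      intro π
      rw [← List.ofFn_get w.toList, List.ofFn_congr hlen, List.ofFn_inj]
      rfl
    have hfiber : ∀ j, Fintype.card {x // v x = j} = w.toList.count j := fun j => by
      rw [← List.card_get_eq_count]
      exact Fintype.card_congr ((finCongr hlen.symm).subtypeEquiv fun _ => Iff.rfl)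
    rw [Fintype.card_congr (Equiv.subtypeEquivRight hv), card_perm_comp_eq]
    simp only [hfiber, List.card_get_eq_count, ← List.perm_iff_count]
    split_ifs <;> push_cast <;> rfl
  · have hempty : IsEmpty {π : Equiv.Perm (Fin u.length) //
        List.ofFn (fun i => u.get (π i)) = w.toList} :=
      ⟨fun π => hlen (by rw [← π.2, List.length_ofFn])⟩
    rw [Fintype.card_eq_zero, if_neg (fun h => hlen h.length_eq), Nat.cast_zero]

theorem coeff_psiMap {n : ℕ} (P : MvPolynomial (Fin n) ℂ) (w : FreeMonoid (Fin n)) :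
    (psiMap P).coeff w = (∏ j, ((multidegree w j).factorial : ℂ)) * P.coeff (multidegree w) := by
  have hterm : ∀ β c, ((c • sympWord (wordOf β)).coeff w : ℂ) =
      (∏ j, ((multidegree w j).factorial : ℂ)) * if multidegree w = β then c else 0 := by
    intro β c
    simp only [MonoidAlgebra.coeff_smul_apply, coeff_sympWord, perm_wordOf_iff, smul_eq_mul]
    split_ifs with h
    · simp only [← h, count_wordOf, mul_comm]
    · simp
  simp only [psiMap, MonoidAlgebra.coeff_finsuppSum, Finsupp.sum_apply, hterm]
  rw [← Finsupp.mul_sum, Finsupp.sum_ite_self_eq]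
  rfl

section PartialDerivatives

variable {σ R : Type*} [CommSemiring R]

theorem coeff_iterate_pderiv (i : σ) (m : ℕ) (γ : σ →₀ ℕ) (P : MvPolynomial σ R) :
    coeff γ ((pderiv i)^[m] P) =
      ((γ i + m).descFactorial m : R) * coeff (γ + Finsupp.single i m) P := by
  induction m generalizing γ with
  | zero => simp
  | succ m ih =>
    rw [Function.iterate_succ_apply', coeff_pderiv, ih, add_assoc, ← Finsupp.single_add,
      Finsupp.add_apply, Finsupp.single_eq_same, add_comm 1 m, add_right_comm,
      Nat.descFactorial_succ, ← add_assoc, show γ i + m + 1 - m = γ i + 1 by omega]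
    push_cast
    ring

theorem coeff_foldl_iterate_pderiv (β : σ →₀ ℕ) {L : List σ} (hL : L.Nodup) (γ : σ →₀ ℕ)
    (P : MvPolynomial σ R) :
    coeff γ (L.foldl (fun Q i => (pderiv i)^[β i] Q) P) =
      ((L.map fun i => (γ i + β i).descFactorial (β i)).prod : R) *
        coeff (γ + (L.map fun i => Finsupp.single i (β i)).sum) P := by
  induction L generalizing P with
  | nil => simp
  | cons a L ih =>
    obtain ⟨haL, hL⟩ := List.nodup_cons.mp hL
    have hsum : (L.map fun i => Finsupp.single i (β i)).sum a = 0 := by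
      rw [← Finsupp.applyAddHom_apply, map_list_sum, List.map_map]
      refine List.sum_eq_zero fun x hx => ?_
      obtain ⟨i, hi, rfl⟩ := List.mem_map.mp hx
      exact Finsupp.single_eq_of_ne (fun h => haL (h ▸ hi))
    rw [List.foldl_cons, ih hL, coeff_iterate_pderiv, Finsupp.add_apply, hsum, add_zero,
      List.map_cons, List.prod_cons, List.map_cons, List.sum_cons, add_assoc,
      add_comm (Finsupp.single a (β a))]
    push_cast
    ring

end PartialDerivatives

theorem coeff_pdOp {n : ℕ} (β γ : Fin n →₀ ℕ) (P : MvPolynomial (Fin n) ℂ) :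
    coeff γ (pdOp β P) = (∏ i, ((γ i + β i).descFactorial (β i) : ℂ)) * coeff (γ + β) P := by
  rw [pdOp, coeff_foldl_iterate_pderiv β (List.nodup_finRange n), ← Fin.sum_univ_def,
    Finsupp.univ_sum_single, Fin.prod_univ_def]
  simp only [Nat.cast_list_prod, List.map_map]
  rfl

theorem constantCoeff_pdOp {n : ℕ} (β : Fin n →₀ ℕ) (P : MvPolynomial (Fin n) ℂ) :
    constantCoeff (pdOp β P) = (∏ i, ((β i).factorial : ℂ)) * coeff β P := by
  rw [constantCoeff_eq, coeff_pdOp, zero_add]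
  simp only [Finsupp.coe_zero, Pi.zero_apply, zero_add, Nat.descFactorial_self]

theorem diffOp_monomial {n : ℕ} (β : Fin n →₀ ℕ) (c : ℂ) (P : MvPolynomial (Fin n) ℂ) :
    diffOp (monomial β c) P = c • pdOp β P := by
  rw [diffOp, ← single_eq_monomial, AddMonoidAlgebra.coeff_single]
  exact Finsupp.sum_single_index (zero_smul ℂ _)

noncomputable def diffOpAddHom {n : ℕ} (P : MvPolynomial (Fin n) ℂ) :
    MvPolynomial (Fin n) ℂ →+ MvPolynomial (Fin n) ℂ where
  toFun Q := diffOp Q P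
  map_zero' := Finsupp.sum_zero_index
  map_add' _ _ := Finsupp.sum_add_index' (fun _ => zero_smul ℂ _) fun _ _ _ => add_smul _ _ _

theorem diffOpAddHom_apply {n : ℕ} (P Q : MvPolynomial (Fin n) ℂ) :
    diffOpAddHom P Q = diffOp Q P :=
  rfl

theorem diffOp_chiMap {n : ℕ} (f : NCPoly n) (P : MvPolynomial (Fin n) ℂ) :
    diffOp (chiMap n f) P = f.coeff.sum fun w c => c • pdOp (multidegree w) P := by
  conv_lhs => rw [← MonoidAlgebra.sum_coeff_single f]
  rw [map_finsuppSum, ← diffOpAddHom_apply, map_finsuppSum]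
  simp only [chiMap_single, diffOpAddHom_apply, diffOp_monomial]

theorem coeff_Dop {n : ℕ} (u w : FreeMonoid (Fin n)) (f : NCPoly n) :
    (Dop u f).coeff w = f.coeff (u * w) :=
  rfl

theorem coeff_one_fdApply {n : ℕ} (f Q : NCPoly n) : (fdApply f Q).coeff 1 = wpair f Q := by
  simp only [fdApply, wpair, MonoidAlgebra.coeff_finsuppSum, Finsupp.sum_apply,
    MonoidAlgebra.coeff_smul_apply, coeff_Dop, mul_one, smul_eq_mul]

/-- For `P ∈ ℂ[x₁,…,xₙ]` and `f ∈ ℂ⟨x₁,…,xₙ⟩`,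
`[f⃖(d)·ψ(P)]_{c.t.} = [χ(f)(∂)·P]_{c.t.}`. -/
theorem ct_fd_psi_eq_ct_diffOp {n : ℕ} (P : MvPolynomial (Fin n) ℂ) (f : NCPoly n) :
    (fdApply f (psiMap P)).coeff (1 : FreeMonoid (Fin n)) =
      MvPolynomial.constantCoeff (diffOp (chiMap n f) P) := by
  rw [coeff_one_fdApply, diffOp_chiMap, map_finsuppSum, wpair]
  simp only [coeff_psiMap, constantCoeff_smul, constantCoeff_pdOp, smul_eq_mul]
end

section
/- For a set partition Ψ ⊢ [k], a generalized set composition A ⊨ [ℓ], and an ordered generalized set composition Φ ⊨ [d] with at most one empty part, the element M⃖_Ψ(d)·d_{A⃖}·𝒜_Φ is either 0 or ±𝒜_{Θ^ε} for some two-colored generalized set composition Θ^ε. -/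
open scoped BigOperators

open Classical in
/-- The operator `M⃖_Ψ(d) = Σ_{∇(w)=Ψ} d_{w⃖}` for a set partition `Ψ` of `[k]`, encoded
as an equivalence relation on `Fin k`: the sum, over all words `w` of length `k` in
`x₁,…,xₙ` with fibre pattern `Ψ`, of the deletion of the prefix `w`. -/
noncomputable def MsymOp (n k : ℕ) (r : Setoid (Fin k)) (x : NCPoly n) : NCPoly n :=
  ∑ f : Fin k → Fin n,
    if (∀ i j, f i = f j ↔ r.r i j)
    then Dop (FreeMonoid.ofList (List.ofFn f)) x
    else 0

/-- `𝒜_A` for the generalized set composition of `[d]` encoded by `g : Fin d → Fin n`. -/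
noncomputable def AltSum (n d : ℕ) (g : Fin d → Fin n) : NCPoly n :=
  ∑ σ : Equiv.Perm (Fin n),
    ((Equiv.Perm.sign σ : ℤ) : ℂ) •
      MonoidAlgebra.single (FreeMonoid.ofList (List.ofFn fun i => σ (g i))) (1 : ℂ)

/-- `𝒜_{Θ^ε}` for a two-colored generalized set composition: `Θ` is encoded by
`h : Fin m → Fin n` and the color set `T = ε⁻¹(1)` by a finset of part indices;
the sum ranges over the permutations moving only indices in `T`. -/
noncomputable def AltSumTC (n m : ℕ) (h : Fin m → Fin n) (T : Finset (Fin n)) : NCPoly n :=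
  ∑ σ ∈ Finset.univ.filter (fun σ : Equiv.Perm (Fin n) => ∀ i ∉ T, σ i = i),
    ((Equiv.Perm.sign σ : ℤ) : ℂ) •
      MonoidAlgebra.single (FreeMonoid.ofList (List.ofFn fun i => σ (h i))) (1 : ℂ)

/-- Ordered generalized set composition with at most the last part empty. -/
def OrderedGSC {n d : ℕ} (g : Fin d → Fin n) : Prop :=
  (∀ j : Fin n, (j : ℕ) + 1 < n → ∃ i, g i = j) ∧
  (∀ j j' : Fin n, j' < j → (∃ i, g i = j) →
    ∃ i', g i' = j' ∧ ∀ i, g i = j → i' < i)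

/-!
Expand `𝒜_Φ = Σ_σ sign σ · σ(Φ)` and cut each word `σ(Φ)` into blocks `σ(Φ₁) σ(Φ₂) σ(Φ₃)` of
lengths `ℓ`, `k`, `d - ℓ - k` (if `d < ℓ + k` every term dies). The word survives `d_{A⃖}` iff
`σ ∘ Φ₁ = A`, and then survives `M⃖_Ψ(d)` iff the fibre pattern of `σ(Φ₂)`, which is that of `Φ₂`,
is `Ψ`, leaving `σ(Φ₃)`. The permutations with `σ ∘ Φ₁ = A` form the coset `τ σ₀`, `τ` fixing the
letters of `A`, so the sum is `sign σ₀ · 𝒜_{Θ^ε}` with `Θ = σ₀ ∘ Φ₃` and `T` the letters not in `A`.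
-/

open Equiv FreeMonoid MonoidAlgebra

section Deletion

variable {n : ℕ}

lemma Dop_coeff (u : FreeMonoid (Fin n)) (x : NCPoly n) (w : FreeMonoid (Fin n)) :
    (Dop u x).coeff w = x.coeff (u * w) := rfl

noncomputable def dopLinear (u : FreeMonoid (Fin n)) : NCPoly n →ₗ[ℂ] NCPoly n where
  toFun := Dop u
  map_add' x y := by ext w; simp only [Dop_coeff, coeff_add, Finsupp.add_apply]
  map_smul' c x := by ext w; simp only [Dop_coeff, coeff_smul_apply, RingHom.id_apply]

@[simp]
lemma dopLinear_apply (u : FreeMonoid (Fin n)) (x : NCPoly n) : dopLinear u x = Dop u x := rfl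

lemma Dop_Dop (u v : FreeMonoid (Fin n)) (x : NCPoly n) : Dop v (Dop u x) = Dop (u * v) x := by
  ext w
  simp only [Dop_coeff, mul_assoc]

lemma Dop_single_mul (u w : FreeMonoid (Fin n)) (c : ℂ) :
    Dop u (single (u * w) c) = single w c := by
  classical
  ext v
  simp only [Dop_coeff, coeff_single, Finsupp.single_apply, mul_right_inj]

lemma Dop_single_eq_zero {u v : FreeMonoid (Fin n)} (h : ∀ w, v ≠ u * w) (c : ℂ) :
    Dop u (single v c) = 0 := by
  classical
  ext w
  simp only [Dop_coeff, coeff_single, Finsupp.single_apply, if_neg (h w), coeff_zero,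
    Finsupp.coe_zero, Pi.zero_apply]

lemma Dop_single_ofFn_append {ℓ : ℕ} (a b : Fin ℓ → Fin n) (v : List (Fin n)) (c : ℂ) :
    Dop (ofList (List.ofFn a)) (single (ofList (List.ofFn b ++ v)) c) =
      if b = a then single (ofList v) c else 0 := by
  split_ifs with hba
  · rw [hba, ofList_append, Dop_single_mul]
  · refine Dop_single_eq_zero (fun w hw => hba (List.ofFn_injective ?_)) c
    rw [← ofList_toList w, ← ofList_append] at hw
    exact List.append_inj_left (ofList.injective hw) (by simp)

lemma Dop_single_eq_zero_of_length_lt {u v : List (Fin n)} (h : v.length < u.length) (c : ℂ) :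
    Dop (ofList u) (single (ofList v) c) = 0 :=
  Dop_single_eq_zero (fun w hw => by
    have := congrArg FreeMonoid.length hw
    rw [length_mul] at this
    change v.length = u.length + w.length at this
    omega) c

end Deletion

section Symmetric

variable (n k : ℕ) (r : Setoid (Fin k))

open Classical in
noncomputable def msymOpLinear : NCPoly n →ₗ[ℂ] NCPoly n :=
  ∑ f : Fin k → Fin n, if ∀ i j, f i = f j ↔ r.r i j then dopLinear (ofList (List.ofFn f)) else 0

@[simp]
lemma msymOpLinear_apply (x : NCPoly n) : msymOpLinear n k r x = MsymOp n k r x := by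
  simp only [msymOpLinear, MsymOp, LinearMap.sum_apply]
  exact Finset.sum_congr rfl fun f _ => by split_ifs <;> rfl

open Classical in
lemma MsymOp_single_ofFn_append (w : Fin k → Fin n) (v : List (Fin n)) (c : ℂ) :
    MsymOp n k r (single (ofList (List.ofFn w ++ v)) c) =
      if ∀ i j, w i = w j ↔ r.r i j then single (ofList v) c else 0 := by
  unfold MsymOp
  rw [Fintype.sum_eq_single w fun f hf => by
    rw [Dop_single_ofFn_append, if_neg (Ne.symm hf), ite_self]]
  simp only [Dop_single_ofFn_append, if_true]

lemma MsymOp_Dop_single_eq_zero_of_length_lt {u v : List (Fin n)} (h : v.length < u.length + k)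
    (c : ℂ) : MsymOp n k r (Dop (ofList u) (single (ofList v) c)) = 0 := by
  refine Finset.sum_eq_zero fun f _ => ?_
  split_ifs
  · rw [Dop_Dop, ← ofList_append]
    exact Dop_single_eq_zero_of_length_lt (by simpa using h) c
  · rfl

end Symmetric

section Alternating

variable {n k ℓ m : ℕ} (r : Setoid (Fin k))

lemma MsymOp_Dop_AltSum {d : ℕ} (u : FreeMonoid (Fin n)) (g : Fin d → Fin n) :
    MsymOp n k r (Dop u (AltSum n d g)) = ∑ σ : Perm (Fin n), ((Perm.sign σ : ℤ) : ℂ) •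
      MsymOp n k r (Dop u (single (ofList (List.ofFn fun i => σ (g i))) 1)) := by
  simp only [← msymOpLinear_apply, ← dopLinear_apply, AltSum, map_sum, map_smul]

lemma MsymOp_Dop_AltSum_eq_zero_of_lt {d : ℕ} (u : List (Fin n)) (g : Fin d → Fin n)
    (h : d < u.length + k) : MsymOp n k r (Dop (ofList u) (AltSum n d g)) = 0 := by
  rw [MsymOp_Dop_AltSum]
  refine Finset.sum_eq_zero fun σ _ => ?_
  rw [MsymOp_Dop_single_eq_zero_of_length_lt n k r (by simpa using h), smul_zero]

open Classical in
lemma MsymOp_Dop_single_ofFn_append (a b : Fin ℓ → Fin n) (w : Fin k → Fin n) (v : List (Fin n))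
    (c : ℂ) :
    MsymOp n k r
        (Dop (ofList (List.ofFn a)) (single (ofList (List.ofFn b ++ (List.ofFn w ++ v))) c)) =
      if ∀ i j, w i = w j ↔ r.r i j then (if b = a then single (ofList v) c else 0) else 0 := by
  rw [Dop_single_ofFn_append]
  by_cases hba : b = a
  · simp only [hba, if_true, MsymOp_single_ofFn_append]
  · simp only [hba, if_false, ite_self, ← msymOpLinear_apply, map_zero]

open Classical in
lemma MsymOp_Dop_AltSum_add (a : Fin ℓ → Fin n) (g : Fin (ℓ + k + m) → Fin n) :
    MsymOp n k r (Dop (ofList (List.ofFn a)) (AltSum n (ℓ + k + m) g)) =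
      if ∀ i j, g (Fin.castAdd m (Fin.natAdd ℓ i)) = g (Fin.castAdd m (Fin.natAdd ℓ j)) ↔ r.r i j
      then ∑ σ : Perm (Fin n), ((Perm.sign σ : ℤ) : ℂ) •
        if (fun i => σ (g (Fin.castAdd m (Fin.castAdd k i)))) = a
        then single (ofList (List.ofFn fun i => σ (g (Fin.natAdd (ℓ + k) i)))) 1 else 0
      else 0 := by
  have hsplit (σ : Perm (Fin n)) : List.ofFn (fun i => σ (g i)) =
      List.ofFn (fun i => σ (g (Fin.castAdd m (Fin.castAdd k i)))) ++
        (List.ofFn (fun i => σ (g (Fin.castAdd m (Fin.natAdd ℓ i)))) ++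
          List.ofFn fun i => σ (g (Fin.natAdd (ℓ + k) i))) := by
    rw [List.ofFn_add, List.ofFn_add, List.append_assoc]
    rfl
  rw [MsymOp_Dop_AltSum]
  simp only [hsplit, MsymOp_Dop_single_ofFn_append, EmbeddingLike.apply_eq_iff_eq]
  split_ifs <;> simp

end Alternating

lemma sum_sign_smul_ite_agree_eq_smul_AltSumTC {n m : ℕ} {ι : Type*} [Fintype ι]
    (σ₀ : Perm (Fin n)) (s : ι → Fin n) (h : Fin m → Fin n) :
    ∑ σ : Perm (Fin n), ((Perm.sign σ : ℤ) : ℂ) •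
      (if (fun i => σ (s i)) = (fun i => σ₀ (s i))
        then single (ofList (List.ofFn fun i => σ (h i))) (1 : ℂ) else 0) =
      ((Perm.sign σ₀ : ℤ) : ℂ) •
        AltSumTC n m (fun i => σ₀ (h i)) (Finset.univ.image fun i => σ₀ (s i))ᶜ := by
  unfold AltSumTC
  rw [Finset.sum_filter, Finset.smul_sum]
  refine Fintype.sum_equiv (Equiv.mulRight σ₀⁻¹) _ _ fun σ => ?_
  have hagree : (fun i => σ (s i)) = (fun i => σ₀ (s i)) ↔
      ∀ x ∉ (Finset.univ.image fun i => σ₀ (s i))ᶜ, σ (σ₀.symm x) = x := by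
    simp [funext_iff]
  have hsign : Perm.sign σ₀ * Perm.sign (σ * σ₀⁻¹) = Perm.sign σ := by
    rw [map_mul, map_inv, mul_comm (Perm.sign σ), mul_inv_cancel_left]
  simp only [Equiv.coe_mulRight, Perm.mul_apply, Perm.coe_inv, Equiv.symm_apply_apply]
  by_cases hσ : (fun i => σ (s i)) = (fun i => σ₀ (s i))
  · rw [if_pos hσ, if_pos (hagree.mp hσ), smul_smul, ← Int.cast_mul, ← Units.val_mul, hsign]
  · rw [if_neg hσ, if_neg (hagree.not.mp hσ), smul_zero, smul_zero]

theorem MsymOp_deriv_AltSum_general (n k ℓ d : ℕ) (r : Setoid (Fin k))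
    (a : Fin ℓ → Fin n) (g : Fin d → Fin n) :
    MsymOp n k r (Dop (FreeMonoid.ofList (List.ofFn a)) (AltSum n d g)) = 0 ∨
      ∃ (m : ℕ) (h : Fin m → Fin n) (T : Finset (Fin n)) (s : ℤˣ),
        MsymOp n k r (Dop (FreeMonoid.ofList (List.ofFn a)) (AltSum n d g)) =
          ((s : ℤ) : ℂ) • AltSumTC n m h T := by
  rcases lt_or_ge d (ℓ + k) with hd | hd
  · exact Or.inl (MsymOp_Dop_AltSum_eq_zero_of_lt r _ g (by simpa using hd))
  obtain ⟨m, rfl⟩ := Nat.exists_eq_add_of_le hd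
  rw [MsymOp_Dop_AltSum_add]
  split_ifs
  · rcases em (∃ σ₀ : Perm (Fin n), (fun i => σ₀ (g (Fin.castAdd m (Fin.castAdd k i)))) = a)
      with ⟨σ₀, rfl⟩ | hnone
    · exact Or.inr ⟨m, _, _, Perm.sign σ₀, sum_sign_smul_ite_agree_eq_smul_AltSumTC σ₀ _ _⟩
    · exact Or.inl (Finset.sum_eq_zero fun σ _ => by rw [if_neg fun hσ => hnone ⟨σ, hσ⟩, smul_zero])
  · exact Or.inl rfl

/-- For a set partition `Ψ ⊢ [k]`, a generalized set composition
`A ⊨ [ℓ]` and an ordered generalized set composition `Φ ⊨ [d]` with at most one empty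
part, the element `M⃖_Ψ(d)·d_{A⃖}·𝒜_Φ` is `0` or `±𝒜_{Θ^ε}` for some two-colored
generalized set composition `Θ^ε`. -/
theorem MsymOp_deriv_AltSum (n k ℓ d : ℕ) (r : Setoid (Fin k))
    (a : Fin ℓ → Fin n) (g : Fin d → Fin n) (hg : OrderedGSC g) :
    MsymOp n k r (Dop (FreeMonoid.ofList (List.ofFn a)) (AltSum n d g)) = 0 ∨
      ∃ (m : ℕ) (h : Fin m → Fin n) (T : Finset (Fin n)) (s : ℤˣ),
        MsymOp n k r (Dop (FreeMonoid.ofList (List.ofFn a)) (AltSum n d g)) =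
          ((s : ℤ) : ℂ) • AltSumTC n m h T :=
  MsymOp_deriv_AltSum_general n k ℓ d r a g
end
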